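/- Let n ≥ 1 be an integer and let 0 < a < b. Then there exists a constant C > 0, depending only on n, a and b, such that for every h ∈ (0, 1], ∑ d_{ℓ,ℓ'} ≤ C · h^{−(2n+2)}, where the sum ranges over all pairs (ℓ, ℓ') ∈ ℕ² with a/h² < λ_{ℓ,ℓ'} < b/h². -/
import Mathlib

open Finset

/-- The dimension `d_{ℓ,ℓ'}` of the space `𝓗^{ℓ,ℓ'}` of complex spherical harmonics of
bidegree `(ℓ,ℓ')` on `S^{2n+1}`. -/
noncomputable def harmDim (n ℓ ℓ' : ℕ) : ℝ :=
  if ℓ = 0 then (Nat.choose (ℓ' + n) ℓ' : ℝ)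
  else if ℓ' = 0 then (Nat.choose (ℓ + n) ℓ : ℝ)
  else (n : ℝ) * (((ℓ : ℝ) + ℓ' + n) / ((ℓ : ℝ) * ℓ')) *
    (Nat.choose (ℓ + n - 1) (ℓ - 1) : ℝ) * (Nat.choose (ℓ' + n - 1) (ℓ' - 1) : ℝ)

private lemma sum_inv_sq_le (N : ℕ) :
    ∑ k ∈ Finset.range N, (1:ℝ)/((k:ℝ)+1)^2 ≤ 2 := by
  have key : ∀ M : ℕ, ∑ k ∈ Finset.range M, (1:ℝ)/((k:ℝ)+1)^2 ≤ 2 - 2/((M:ℝ)+1) := by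
    intro M
    induction M with
    | zero => norm_num
    | succ M ih =>
      rw [Finset.sum_range_succ]
      have h1 : (0:ℝ) < (M:ℝ)+1 := by positivity
      have h2 : (0:ℝ) < (M:ℝ)+2 := by positivity
      have hstep : (1:ℝ)/((M:ℝ)+1)^2 ≤ 2/((M:ℝ)+1) - 2/((M:ℝ)+2) := by
        rw [div_sub_div _ _ h1.ne' h2.ne', div_le_div_iff₀ (by positivity) (by positivity)]
        nlinarith [sq_nonneg ((M:ℝ)+1)]
      push_cast
      rw [show (M:ℝ)+1+1 = (M:ℝ)+2 by ring]
      linarith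
  have h3 : (0:ℝ) < 2/((N:ℝ)+1) := by positivity
  linarith [key N]

private lemma boundary_bound (n : ℕ) (hn : 1 ≤ n) (b Λ : ℝ) (hb : 0 < b) (hbΛ : b ≤ Λ)
    (ℓ' : ℕ) (hlt : ((n:ℝ) * ℓ') < Λ) :
    ((Nat.choose (ℓ' + n) ℓ' : ℕ) : ℝ) ≤
      ((n:ℝ)^(2*n+1) * (1+(n:ℝ)/b)^(n-1)) * Λ^(n-1) * ((ℓ':ℝ)+(n:ℝ)) := by
  have hΛ0 : 0 < Λ := lt_of_lt_of_le hb hbΛ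
  have hn1 : (1:ℝ) ≤ (n:ℝ) := by exact_mod_cast hn
  have hsymm : (ℓ' + n).choose ℓ' = (ℓ' + n).choose n := by
    have h := Nat.choose_symm (n := ℓ' + n) (k := ℓ') (Nat.le_add_right _ _)
    rw [show ℓ' + n - ℓ' = n by omega] at h
    exact h.symm
  have hch : ((Nat.choose (ℓ' + n) ℓ' : ℕ) : ℝ) ≤ ((ℓ':ℝ) + n)^n := by
    rw [hsymm]
    calc ((Nat.choose (ℓ' + n) n : ℕ) : ℝ) ≤ (((ℓ' + n)^n : ℕ) : ℝ) := by
          exact_mod_cast Nat.choose_le_pow _ _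
      _ = ((ℓ':ℝ) + n)^n := by push_cast; ring
  have hl'Λ : (ℓ':ℝ) < Λ := by nlinarith [Nat.cast_nonneg (α := ℝ) ℓ']
  have hx : (ℓ':ℝ) + n ≤ (1+(n:ℝ)/b) * Λ := by
    have : (n:ℝ) * b ≤ (n:ℝ) * Λ := by nlinarith
    have h2 : (n:ℝ) ≤ ((n:ℝ)/b) * Λ := by
      rw [div_mul_eq_mul_div, le_div_iff₀ hb]; linarith
    nlinarith
  have hx0 : (0:ℝ) ≤ (ℓ':ℝ) + n := by positivity
  have hpow : ∀ x : ℝ, x^n = x^(n-1) * x := by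
    intro x
    conv_lhs => rw [show n = (n-1)+1 by omega]
    rw [pow_succ]
  have h1 : ((ℓ':ℝ) + n)^(n-1) ≤ ((1+(n:ℝ)/b) * Λ)^(n-1) := by
    exact pow_le_pow_left₀ hx0 hx _
  have hK : (1:ℝ) ≤ (n:ℝ)^(2*n+1) := one_le_pow₀ hn1
  calc ((Nat.choose (ℓ' + n) ℓ' : ℕ) : ℝ) ≤ ((ℓ':ℝ) + n)^n := hch
    _ = ((ℓ':ℝ) + n)^(n-1) * ((ℓ':ℝ) + n) := hpow _
    _ ≤ ((1+(n:ℝ)/b) * Λ)^(n-1) * ((ℓ':ℝ) + n) := by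
        exact mul_le_mul_of_nonneg_right h1 hx0
    _ = (1+(n:ℝ)/b)^(n-1) * Λ^(n-1) * ((ℓ':ℝ) + n) := by rw [mul_pow]
    _ ≤ ((n:ℝ)^(2*n+1) * (1+(n:ℝ)/b)^(n-1)) * Λ^(n-1) * ((ℓ':ℝ)+(n:ℝ)) := by
        have hnn : (0:ℝ) ≤ (1+(n:ℝ)/b)^(n-1) * Λ^(n-1) * ((ℓ':ℝ) + n) := by positivity
        nlinarith [hK, hnn]

private lemma harmDim_le (n : ℕ) (hn : 1 ≤ n) (b Λ : ℝ) (hb : 0 < b) (hbΛ : b ≤ Λ)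
    (ℓ ℓ' : ℕ) (hlt : ((2 * ℓ * ℓ' + n * (ℓ + ℓ') : ℕ) : ℝ) < Λ) :
    harmDim n ℓ ℓ' ≤
      ((n:ℝ)^(2*n+1) * (1+(n:ℝ)/b)^(n-1)) * Λ^(n-1) * ((ℓ:ℝ)+(ℓ':ℝ)+(n:ℝ)) := by
  have hΛ0 : 0 < Λ := lt_of_lt_of_le hb hbΛ
  have hn1 : (1:ℝ) ≤ (n:ℝ) := by exact_mod_cast hn
  push_cast at hlt
  unfold harmDim
  split_ifs with h1 h2
  · -- ℓ = 0
    subst h1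
    have hlt' : (n:ℝ) * ℓ' < Λ := by push_cast at hlt ⊢; nlinarith
    have := boundary_bound n hn b Λ hb hbΛ ℓ' hlt'
    push_cast at this ⊢
    linarith
  · -- ℓ' = 0
    subst h2
    have hlt' : (n:ℝ) * ℓ < Λ := by push_cast at hlt ⊢; nlinarith
    have := boundary_bound n hn b Λ hb hbΛ ℓ hlt'
    push_cast at this ⊢
    linarith
  · -- main case : ℓ, ℓ' ≥ 1
    have hℓ1 : 1 ≤ ℓ := Nat.one_le_iff_ne_zero.mpr h1
    have hℓ'1 : 1 ≤ ℓ' := Nat.one_le_iff_ne_zero.mpr h2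
    have hS : (0:ℝ) < (ℓ:ℝ) := by exact_mod_cast hℓ1
    have hS' : (0:ℝ) < (ℓ':ℝ) := by exact_mod_cast hℓ'1
    -- choose bounds
    have hch : ∀ k : ℕ, 1 ≤ k →
        ((Nat.choose (k + n - 1) (k - 1) : ℕ) : ℝ) ≤ (n:ℝ)^n * (k:ℝ)^n := by
      intro k hk
      obtain ⟨k', rfl⟩ : ∃ k', k = k' + 1 := ⟨k-1, by omega⟩
      have hsymm : (k' + 1 + n - 1).choose (k' + 1 - 1) = (k' + 1 + n - 1).choose n := by
        have h := Nat.choose_symm (n := k' + 1 + n - 1) (k := k' + 1 - 1) (by omega)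
        rw [show k' + 1 + n - 1 - (k' + 1 - 1) = n by omega] at h
        exact h.symm
      have hle : k' + 1 + n - 1 ≤ n * (k' + 1) := by
        have h' : k' ≤ n * k' := Nat.le_mul_of_pos_left k' (by omega)
        calc k' + 1 + n - 1 = k' + n := by omega
          _ ≤ n * k' + n := Nat.add_le_add_right h' n
          _ = n * (k' + 1) := by ring
      calc ((Nat.choose (k' + 1 + n - 1) (k' + 1 - 1) : ℕ) : ℝ)
          = ((Nat.choose (k' + 1 + n - 1) n : ℕ) : ℝ) := by rw [hsymm]
        _ ≤ (((k' + 1 + n - 1)^n : ℕ) : ℝ) := by exact_mod_cast Nat.choose_le_pow _ _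
        _ ≤ (((n * (k' + 1))^n : ℕ) : ℝ) := by
            exact_mod_cast Nat.pow_le_pow_left hle n
        _ = (n:ℝ)^n * ((k'+1:ℕ):ℝ)^n := by push_cast; rw [mul_pow]
    have hC1 := hch ℓ hℓ1
    have hC2 := hch ℓ' hℓ'1
    have hprod : (ℓ:ℝ) * (ℓ':ℝ) ≤ Λ := by nlinarith
    have hw0 : (0:ℝ) ≤ (ℓ:ℝ) + (ℓ':ℝ) + (n:ℝ) := by positivity
    have hfrac0 : (0:ℝ) ≤ (n:ℝ) * (((ℓ:ℝ) + ℓ' + n) / ((ℓ:ℝ) * ℓ')) := by positivity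
    have h5 : (1:ℝ) ≤ (1+(n:ℝ)/b)^(n-1) := by
      apply one_le_pow₀
      have : (0:ℝ) ≤ (n:ℝ)/b := by positivity
      linarith
    calc (n : ℝ) * (((ℓ : ℝ) + ℓ' + n) / ((ℓ : ℝ) * ℓ')) *
          (Nat.choose (ℓ + n - 1) (ℓ - 1) : ℝ) * (Nat.choose (ℓ' + n - 1) (ℓ' - 1) : ℝ)
        ≤ (n : ℝ) * (((ℓ : ℝ) + ℓ' + n) / ((ℓ : ℝ) * ℓ')) *
          ((n:ℝ)^n * (ℓ:ℝ)^n) * ((n:ℝ)^n * (ℓ':ℝ)^n) := by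
          gcongr
      _ = (n:ℝ)^(2*n+1) * (((ℓ:ℝ) * ℓ')^(n-1)) * ((ℓ:ℝ) + ℓ' + n) := by
          have hnn : n = (n-1)+1 := by omega
          field_simp
          rw [show (ℓ:ℝ)^n = (ℓ:ℝ)^(n-1) * ℓ by conv_lhs => rw [hnn, pow_succ],
             show (ℓ':ℝ)^n = (ℓ':ℝ)^(n-1) * ℓ' by conv_lhs => rw [hnn, pow_succ],
             show (n:ℝ)^(2*n+1) = (n:ℝ) * (n:ℝ)^n * (n:ℝ)^n by
               rw [← pow_succ', ← pow_add]; congr 1; omega]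
          ring
      _ ≤ (n:ℝ)^(2*n+1) * (Λ^(n-1)) * ((ℓ:ℝ) + ℓ' + n) := by
          gcongr
      _ ≤ ((n:ℝ)^(2*n+1) * (1+(n:ℝ)/b)^(n-1)) * Λ^(n-1) * ((ℓ:ℝ)+(ℓ':ℝ)+(n:ℝ)) := by
          nlinarith [h5, mul_nonneg (mul_nonneg (pow_nonneg (by positivity : (0:ℝ) ≤ (n:ℝ)) (2*n+1)) (pow_nonneg hΛ0.le (n-1))) hw0]

private lemma row_bound (n : ℕ) (hn : 1 ≤ n) (Λ : ℝ) (hΛ0 : 0 < Λ) (N : ℕ) (hN : (N:ℝ) ≤ Λ)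
    (ℓ : ℕ) (hℓ : ℓ ∈ Finset.range (N+1)) :
    ∑ ℓ' ∈ Finset.range (N+1),
        (if ((2 * ℓ * ℓ' + n * (ℓ + ℓ') : ℕ) : ℝ) < Λ then ((ℓ:ℝ)+(ℓ':ℝ)+(n:ℝ)) else 0)
      ≤ Λ^2 * (1/((ℓ:ℝ)+1)^2) + (((n:ℝ)+2)*Λ + (n:ℝ)) := by
  have hn1 : (1:ℝ) ≤ (n:ℝ) := by exact_mod_cast hn
  have hℓΛ : (ℓ:ℝ) ≤ Λ := by
    have : ℓ ≤ N := Nat.lt_succ_iff.mp (Finset.mem_range.mp hℓ)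
    have : (ℓ:ℝ) ≤ (N:ℝ) := by exact_mod_cast this
    linarith
  set c : ℝ := if ℓ = 0 then Λ else Λ/(2*(ℓ:ℝ)) with hc
  have hℓpos : ℓ ≠ 0 → (0:ℝ) < (ℓ:ℝ) := by
    intro h; exact_mod_cast Nat.pos_of_ne_zero h
  have hc0 : 0 ≤ c := by
    rw [hc]; split_ifs with h
    · exact hΛ0.le
    · positivity
  have hkey : ∀ ℓ' : ℕ, ((2 * ℓ * ℓ' + n * (ℓ + ℓ') : ℕ) : ℝ) < Λ → (ℓ':ℝ) ≤ c := by
    intro ℓ' hcond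
    push_cast at hcond
    rw [hc]; split_ifs with h
    · subst h
      simp only [Nat.cast_zero] at hcond ⊢
      nlinarith [Nat.cast_nonneg (α := ℝ) ℓ']
    · have hp := hℓpos h
      rw [le_div_iff₀ (by linarith)]
      nlinarith [Nat.cast_nonneg (α := ℝ) ℓ', Nat.cast_nonneg (α := ℝ) n]
  rw [← Finset.sum_filter]
  set s := (Finset.range (N+1)).filter
      (fun ℓ' => ((2 * ℓ * ℓ' + n * (ℓ + ℓ') : ℕ) : ℝ) < Λ) with hs
  have hsub : s ⊆ Finset.range (⌊c⌋₊ + 1) := by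
    intro ℓ' hmem
    rw [hs, Finset.mem_filter] at hmem
    exact Finset.mem_range.mpr (Nat.lt_succ_iff.mpr (Nat.le_floor (hkey ℓ' hmem.2)))
  have hcard : (s.card : ℝ) ≤ c + 1 := by
    have h1 : s.card ≤ ⌊c⌋₊ + 1 := by
      simpa using Finset.card_le_card hsub
    have h2 : ((⌊c⌋₊ : ℝ) + 1) ≤ c + 1 := by
      have := Nat.floor_le hc0; linarith
    calc (s.card : ℝ) ≤ ((⌊c⌋₊ + 1 : ℕ) : ℝ) := by exact_mod_cast h1
      _ = (⌊c⌋₊ : ℝ) + 1 := by push_cast; ring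
      _ ≤ c + 1 := h2
  have hM0 : (0:ℝ) ≤ (ℓ:ℝ) + c + n := by positivity
  have hsum : ∑ ℓ' ∈ s, ((ℓ:ℝ)+(ℓ':ℝ)+(n:ℝ)) ≤ (c+1) * ((ℓ:ℝ) + c + n) := by
    calc ∑ ℓ' ∈ s, ((ℓ:ℝ)+(ℓ':ℝ)+(n:ℝ)) ≤ s.card • ((ℓ:ℝ) + c + n) := by
          apply Finset.sum_le_card_nsmul
          intro ℓ' hmem
          rw [hs, Finset.mem_filter] at hmem
          have := hkey ℓ' hmem.2
          linarith
      _ = (s.card : ℝ) * ((ℓ:ℝ) + c + n) := by rw [nsmul_eq_mul]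
      _ ≤ (c+1) * ((ℓ:ℝ) + c + n) := mul_le_mul_of_nonneg_right hcard hM0
  refine hsum.trans ?_
  rw [hc]
  split_ifs with h
  · subst h
    simp only [Nat.cast_zero]
    nlinarith
  · have hp := hℓpos h
    have hx1 : (1:ℝ) ≤ (ℓ:ℝ) := by exact_mod_cast Nat.pos_of_ne_zero h
    set x : ℝ := (ℓ:ℝ)
    have hcx : Λ/(2*x) * x = Λ/2 := by field_simp
    have hc2 : Λ/(2*x) ≤ Λ/2 := by
      apply div_le_div_of_nonneg_left hΛ0.le (by norm_num)
      linarith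
    have hc3 : (Λ/(2*x))^2 ≤ Λ^2 * (1/(x+1)^2) := by
      rw [div_pow, mul_one_div]
      apply div_le_div_of_nonneg_left (sq_nonneg Λ) (by positivity)
      nlinarith
    have hnc : (n:ℝ) * (Λ/(2*x)) ≤ (n:ℝ) * (Λ/2) :=
      mul_le_mul_of_nonneg_left hc2 (by positivity)
    nlinarith [hcx, hc3, hnc, hc2, hℓΛ, hn1, hΛ0.le]

/-- For `n ≥ 1` and `0 < a < b`, the total dimension of the eigenspaces with
`a/h² < λ_{ℓ,ℓ'} < b/h²` is at most `C·h^{−(2n+2)}`, where `λ_{ℓ,ℓ'} = 2ℓℓ' + n(ℓ+ℓ')`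
and `Q = 2n+2` is the homogeneous dimension of `S^{2n+1}`. -/
theorem dim_localized_upper (n : ℕ) (hn : 1 ≤ n) (a b : ℝ) (ha : 0 < a) (hab : a < b) :
    ∃ C : ℝ, 0 < C ∧ ∀ h : ℝ, h ∈ Set.Ioc (0 : ℝ) 1 →
      (∑ p ∈ (Finset.range (⌊b / h ^ 2⌋₊ + 1) ×ˢ Finset.range (⌊b / h ^ 2⌋₊ + 1)).filter
          (fun p => a / h ^ 2 < ((2 * p.1 * p.2 + n * (p.1 + p.2) : ℕ) : ℝ) ∧
            ((2 * p.1 * p.2 + n * (p.1 + p.2) : ℕ) : ℝ) < b / h ^ 2),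
        harmDim n p.1 p.2)
      ≤ C / h ^ (2 * n + 2) := by
  classical
  have hb : 0 < b := lt_trans ha hab
  have hn0 : (0:ℝ) < (n:ℝ) := by exact_mod_cast hn
  have hnb : (0:ℝ) ≤ (n:ℝ)/b := div_nonneg hn0.le hb.le
  set K₁ : ℝ := (n:ℝ)^(2*n+1) * (1+(n:ℝ)/b)^(n-1) with hK₁def
  set C₂ : ℝ := 2 + (1+1/b)*(((n:ℝ)+2)+(n:ℝ)/b) with hC₂def
  have hK₁0 : 0 < K₁ := by
    apply mul_pos (pow_pos hn0 _) (pow_pos (by linarith) _)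
  have hC₂0 : 0 < C₂ := by
    have t1 : (0:ℝ) < 1/b := one_div_pos.mpr hb
    have t2 : (0:ℝ) < (1+1/b)*(((n:ℝ)+2)+(n:ℝ)/b) :=
      mul_pos (by linarith) (by linarith)
    rw [hC₂def]
    linarith
  refine ⟨K₁ * C₂ * b^(n+1), by positivity, ?_⟩
  intro h hh
  obtain ⟨hh0, hh1⟩ := hh
  have hh2 : (0:ℝ) < h^2 := by positivity
  set Λ : ℝ := b / h ^ 2 with hΛdef
  have hΛb : b ≤ Λ := by
    rw [hΛdef, le_div_iff₀ hh2]
    have h21 : h^2 ≤ 1 := by nlinarith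
    nlinarith [mul_le_mul_of_nonneg_left h21 hb.le]
  have hΛ0 : 0 < Λ := lt_of_lt_of_le hb hΛb
  set N : ℕ := ⌊Λ⌋₊ with hNdef
  have hNle : (N:ℝ) ≤ Λ := Nat.floor_le hΛ0.le
  have hfin : K₁ * Λ^(n-1) * (C₂ * Λ^2) = K₁ * C₂ * b^(n+1) / h^(2*n+2) := by
    have p1 : Λ^(n-1) * Λ^2 = Λ^(n+1) := by rw [← pow_add]; congr 1; omega
    have p2 : Λ^(n+1) = b^(n+1) / h^(2*n+2) := by
      rw [hΛdef, div_pow, show 2*n+2 = 2*(n+1) by ring, pow_mul]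
    calc K₁ * Λ^(n-1) * (C₂ * Λ^2) = K₁*C₂*(Λ^(n-1)*Λ^2) := by ring
      _ = K₁*C₂*(b^(n+1)/h^(2*n+2)) := by rw [p1, p2]
      _ = K₁*C₂*b^(n+1)/h^(2*n+2) := by ring
  rw [← hfin]
  clear_value K₁ C₂ Λ N
  have hK₁Λ0 : 0 ≤ K₁ * Λ^(n-1) := mul_nonneg hK₁0.le (pow_nonneg hΛ0.le _)
  calc (∑ p ∈ (Finset.range (N + 1) ×ˢ Finset.range (N + 1)).filter
          (fun p => a / h ^ 2 < ((2 * p.1 * p.2 + n * (p.1 + p.2) : ℕ) : ℝ) ∧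
            ((2 * p.1 * p.2 + n * (p.1 + p.2) : ℕ) : ℝ) < Λ),
        harmDim n p.1 p.2)
      ≤ ∑ p ∈ (Finset.range (N + 1) ×ˢ Finset.range (N + 1)).filter
          (fun p => a / h ^ 2 < ((2 * p.1 * p.2 + n * (p.1 + p.2) : ℕ) : ℝ) ∧
            ((2 * p.1 * p.2 + n * (p.1 + p.2) : ℕ) : ℝ) < Λ),
          K₁ * Λ^(n-1) * ((p.1:ℝ)+(p.2:ℝ)+(n:ℝ)) := by
        apply Finset.sum_le_sum
        intro p hp
        rw [hK₁def]
        exact harmDim_le n hn b Λ hb hΛb p.1 p.2 (Finset.mem_filter.mp hp).2.2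
    _ = K₁ * Λ^(n-1) * ∑ p ∈ (Finset.range (N + 1) ×ˢ Finset.range (N + 1)).filter
          (fun p => a / h ^ 2 < ((2 * p.1 * p.2 + n * (p.1 + p.2) : ℕ) : ℝ) ∧
            ((2 * p.1 * p.2 + n * (p.1 + p.2) : ℕ) : ℝ) < Λ),
          ((p.1:ℝ)+(p.2:ℝ)+(n:ℝ)) := by rw [← Finset.mul_sum]
    _ ≤ K₁ * Λ^(n-1) * (C₂ * Λ^2) := by
        apply mul_le_mul_of_nonneg_left ?_ hK₁Λ0
        calc (∑ p ∈ (Finset.range (N + 1) ×ˢ Finset.range (N + 1)).filter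
                (fun p => a / h ^ 2 < ((2 * p.1 * p.2 + n * (p.1 + p.2) : ℕ) : ℝ) ∧
                  ((2 * p.1 * p.2 + n * (p.1 + p.2) : ℕ) : ℝ) < Λ),
              ((p.1:ℝ)+(p.2:ℝ)+(n:ℝ)))
            ≤ ∑ p ∈ (Finset.range (N + 1) ×ˢ Finset.range (N + 1)).filter
                (fun p => ((2 * p.1 * p.2 + n * (p.1 + p.2) : ℕ) : ℝ) < Λ),
              ((p.1:ℝ)+(p.2:ℝ)+(n:ℝ)) := by
              apply Finset.sum_le_sum_of_subset_of_nonneg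
              · intro p hp
                rw [Finset.mem_filter] at hp ⊢
                exact ⟨hp.1, hp.2.2⟩
              · intro p _ _
                positivity
          _ = ∑ x ∈ Finset.range (N + 1), ∑ y ∈ Finset.range (N + 1),
                (if ((2 * x * y + n * (x + y) : ℕ) : ℝ) < Λ then ((x:ℝ)+(y:ℝ)+(n:ℝ)) else 0) := by
              rw [Finset.sum_filter, Finset.sum_product]
          _ ≤ ∑ x ∈ Finset.range (N + 1),
                (Λ^2 * (1/((x:ℝ)+1)^2) + (((n:ℝ)+2)*Λ + (n:ℝ))) := by
              apply Finset.sum_le_sum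
              intro x hx
              exact row_bound n hn Λ hΛ0 N hNle x hx
          _ = Λ^2 * (∑ x ∈ Finset.range (N + 1), 1/((x:ℝ)+1)^2)
                + ((N:ℝ)+1) * (((n:ℝ)+2)*Λ + (n:ℝ)) := by
              rw [Finset.sum_add_distrib, ← Finset.mul_sum, Finset.sum_const,
                Finset.card_range, nsmul_eq_mul]
              push_cast; ring
          _ ≤ C₂ * Λ^2 := by
              have e1 := sum_inv_sq_le (N+1)
              have hE0 : (0:ℝ) ≤ ((n:ℝ)+2)*Λ + (n:ℝ) := by positivity
              have e2 : ((N:ℝ)+1) ≤ Λ + 1 := by linarith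
              have e3 : Λ + 1 ≤ (1+1/b)*Λ := by
                have : (1:ℝ) ≤ Λ/b := (one_le_div hb).mpr hΛb
                have : (1:ℝ) ≤ (1/b)*Λ := by rw [one_div, inv_mul_eq_div]; exact this
                nlinarith
              have e4 : ((n:ℝ)+2)*Λ + (n:ℝ) ≤ (((n:ℝ)+2)+(n:ℝ)/b)*Λ := by
                have : (n:ℝ) ≤ ((n:ℝ)/b)*Λ := by
                  rw [div_mul_eq_mul_div, le_div_iff₀ hb]
                  nlinarith
                nlinarith
              have t1 : Λ^2 * (∑ x ∈ Finset.range (N + 1), 1/((x:ℝ)+1)^2) ≤ Λ^2 * 2 :=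
                mul_le_mul_of_nonneg_left e1 (sq_nonneg Λ)
              have t2 : ((N:ℝ)+1) * (((n:ℝ)+2)*Λ + (n:ℝ)) ≤ (Λ+1) * (((n:ℝ)+2)*Λ + (n:ℝ)) :=
                mul_le_mul_of_nonneg_right e2 hE0
              have t3 : (Λ+1) * (((n:ℝ)+2)*Λ + (n:ℝ))
                  ≤ ((1+1/b)*Λ) * ((((n:ℝ)+2)+(n:ℝ)/b)*Λ) := by
                apply mul_le_mul e3 e4 hE0
                positivity
              have t4 : ((1+1/b)*Λ) * ((((n:ℝ)+2)+(n:ℝ)/b)*Λ)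
                  = (1+1/b)*(((n:ℝ)+2)+(n:ℝ)/b)*Λ^2 := by ring
              have t5 : C₂ * Λ^2 = 2*Λ^2 + (1+1/b)*(((n:ℝ)+2)+(n:ℝ)/b)*Λ^2 := by
                rw [hC₂def]; ring
              linarith
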